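/- Let U ⊆ ℂ be open, let u : U → ℝ be harmonic (so that dσ₀² = e^{2u}|dz|² is a flat conformal metric on U), and let V : U → (0,∞) be a smooth function such that V·dσ₀² has constant curvature κ ≠ 0, i.e., −Δ₀(u + (1/2)·log V) = κ·V·e^{2u} on U. Then the metric V^{−1/|κ|}·dσ₀² is a generalized Ricci metric of type (2 + 2|κ|, 0, 0) on U with curvature −sgn(κ)·V^{(|κ|+1)/|κ|}, and the metric V^{1/|κ|}·dσ₀² is a generalized Ricci metric of type (2 − 2|κ|, 0, 0) on U with curvature sgn(κ)·V^{(|κ|−1)/|κ|}. -/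

import Mathlib

open Filter Topology

/-- Euclidean Laplacian on `ℂ ≅ ℝ²`. -/
noncomputable def lap0 (g : ℂ → ℝ) (z : ℂ) : ℝ :=
  fderiv ℝ (fun w => fderiv ℝ g w 1) z 1 +
    fderiv ℝ (fun w => fderiv ℝ g w Complex.I) z Complex.I

/-- Squared Euclidean gradient norm on `ℂ ≅ ℝ²`. -/
noncomputable def grad0sq (g : ℂ → ℝ) (z : ℂ) : ℝ :=
  (fderiv ℝ g z 1) ^ 2 + (fderiv ℝ g z Complex.I) ^ 2

/-- Gaussian curvature of the conformal metric `e^{-2f}|dz|²`. -/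
noncomputable def curv (f : ℂ → ℝ) (z : ℂ) : ℝ :=
  Real.exp (2 * f z) * lap0 f z

/-- `e^{-2f}|dz|²` is a generalized Ricci metric of type `(a,b,c)` on `U`:
`(c-K)·ΔK + ‖∇K‖² + (aK+b)(K-c)² = 0`, where `Δ = e^{2f}Δ₀` and `‖∇·‖² = e^{2f}|∇₀·|²`. -/
def IsGenRicci (a b c : ℝ) (f : ℂ → ℝ) (U : Set ℂ) : Prop :=
  ∀ z ∈ U,
    (c - curv f z) * (Real.exp (2 * f z) * lap0 (curv f) z) +
      Real.exp (2 * f z) * grad0sq (curv f) z +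
      (a * curv f z + b) * (curv f z - c) ^ 2 = 0

section helpers

variable {U : Set ℂ} {z : ℂ}

private lemma smooth_fd {g : ℂ → ℝ} (hg : ContDiffOn ℝ (⊤ : ℕ∞) g U) (hU : IsOpen U) (v : ℂ) :
    ContDiffOn ℝ (⊤ : ℕ∞) (fun w => fderiv ℝ g w v) U :=
  (ContinuousLinearMap.apply ℝ ℝ v).contDiff.comp_contDiffOn (hg.fderiv_of_isOpen hU (by simp))

private lemma diffAt {g : ℂ → ℝ} (hg : ContDiffOn ℝ (⊤ : ℕ∞) g U) (hU : IsOpen U) (hz : z ∈ U) :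
    DifferentiableAt ℝ g z :=
  (hg.contDiffAt (hU.mem_nhds hz)).differentiableAt (by simp)

private lemma fd_add_at {g h : ℂ → ℝ} (hg : ContDiffOn ℝ (⊤ : ℕ∞) g U) (hh : ContDiffOn ℝ (⊤ : ℕ∞) h U)
    (hU : IsOpen U) (hz : z ∈ U) (v : ℂ) :
    fderiv ℝ (fun w => fderiv ℝ (fun y => g y + h y) w v) z v
      = fderiv ℝ (fun w => fderiv ℝ g w v) z v + fderiv ℝ (fun w => fderiv ℝ h w v) z v := by
  have hev : (fun w => fderiv ℝ (fun y => g y + h y) w v)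
      =ᶠ[𝓝 z] fun w => fderiv ℝ g w v + fderiv ℝ h w v := by
    filter_upwards [hU.mem_nhds hz] with w hw
    rw [fderiv_fun_add (diffAt hg hU hw) (diffAt hh hU hw)]
    rfl
  rw [hev.fderiv_eq,
    fderiv_fun_add (diffAt (smooth_fd hg hU v) hU hz) (diffAt (smooth_fd hh hU v) hU hz)]
  simp

private lemma lap0_add {g h : ℂ → ℝ} (hg : ContDiffOn ℝ (⊤ : ℕ∞) g U) (hh : ContDiffOn ℝ (⊤ : ℕ∞) h U)
    (hU : IsOpen U) (hz : z ∈ U) :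
    lap0 (fun w => g w + h w) z = lap0 g z + lap0 h z := by
  unfold lap0
  rw [fd_add_at hg hh hU hz 1, fd_add_at hg hh hU hz Complex.I]
  ring

private lemma fd_const_mul_at {g : ℂ → ℝ} (hg : ContDiffOn ℝ (⊤ : ℕ∞) g U)
    (hU : IsOpen U) (hz : z ∈ U) (c : ℝ) (v : ℂ) :
    fderiv ℝ (fun w => fderiv ℝ (fun y => c * g y) w v) z v
      = c * fderiv ℝ (fun w => fderiv ℝ g w v) z v := by
  have hev : (fun w => fderiv ℝ (fun y => c * g y) w v)
      =ᶠ[𝓝 z] fun w => c * fderiv ℝ g w v := by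
    filter_upwards [hU.mem_nhds hz] with w hw
    rw [fderiv_const_mul (diffAt hg hU hw) c]
    rfl
  rw [hev.fderiv_eq, fderiv_const_mul (diffAt (smooth_fd hg hU v) hU hz) c]
  simp

private lemma lap0_const_mul {g : ℂ → ℝ} (hg : ContDiffOn ℝ (⊤ : ℕ∞) g U)
    (hU : IsOpen U) (hz : z ∈ U) (c : ℝ) :
    lap0 (fun w => c * g w) z = c * lap0 g z := by
  unfold lap0
  rw [fd_const_mul_at hg hU hz c 1, fd_const_mul_at hg hU hz c Complex.I]
  ring

private lemma fd1_exp {g : ℂ → ℝ} (hd : DifferentiableAt ℝ g z) (v : ℂ) :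
    fderiv ℝ (fun y => Real.exp (g y)) z v = Real.exp (g z) * fderiv ℝ g z v := by
  rw [(hd.hasFDerivAt.exp).fderiv]
  simp

private lemma fd_exp_at {g : ℂ → ℝ} (hg : ContDiffOn ℝ (⊤ : ℕ∞) g U)
    (hU : IsOpen U) (hz : z ∈ U) (v : ℂ) :
    fderiv ℝ (fun w => fderiv ℝ (fun y => Real.exp (g y)) w v) z v
      = Real.exp (g z) * fderiv ℝ (fun w => fderiv ℝ g w v) z v
        + Real.exp (g z) * (fderiv ℝ g z v) ^ 2 := by
  have hev : (fun w => fderiv ℝ (fun y => Real.exp (g y)) w v)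
      =ᶠ[𝓝 z] fun w => Real.exp (g w) * fderiv ℝ g w v := by
    filter_upwards [hU.mem_nhds hz] with w hw
    exact fd1_exp (diffAt hg hU hw) v
  have dA : DifferentiableAt ℝ (fun w => Real.exp (g w)) z := (diffAt hg hU hz).exp
  have dB : DifferentiableAt ℝ (fun w => fderiv ℝ g w v) z :=
    diffAt (smooth_fd hg hU v) hU hz
  rw [hev.fderiv_eq, fderiv_fun_mul dA dB]
  simp only [ContinuousLinearMap.add_apply, ContinuousLinearMap.coe_smul',
    Pi.smul_apply, smul_eq_mul]
  rw [fd1_exp (diffAt hg hU hz) v]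
  ring

private lemma lap0_exp {g : ℂ → ℝ} (hg : ContDiffOn ℝ (⊤ : ℕ∞) g U)
    (hU : IsOpen U) (hz : z ∈ U) :
    lap0 (fun w => Real.exp (g w)) z = Real.exp (g z) * (lap0 g z + grad0sq g z) := by
  unfold lap0 grad0sq
  rw [fd_exp_at hg hU hz 1, fd_exp_at hg hU hz Complex.I]
  ring

private lemma grad0sq_exp {g : ℂ → ℝ} (hd : DifferentiableAt ℝ g z) :
    grad0sq (fun w => Real.exp (g w)) z = (Real.exp (g z)) ^ 2 * grad0sq g z := by
  unfold grad0sq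
  rw [fd1_exp hd 1, fd1_exp hd Complex.I]
  ring

private lemma fd1_const_mul {g : ℂ → ℝ} (hd : DifferentiableAt ℝ g z) (c : ℝ) (v : ℂ) :
    fderiv ℝ (fun y => c * g y) z v = c * fderiv ℝ g z v := by
  rw [fderiv_const_mul hd c]
  simp

private lemma grad0sq_const_mul {g : ℂ → ℝ} (hd : DifferentiableAt ℝ g z) (c : ℝ) :
    grad0sq (fun w => c * g w) z = c ^ 2 * grad0sq g z := by
  unfold grad0sq
  rw [fd1_const_mul hd c 1, fd1_const_mul hd c Complex.I]
  ring

private lemma fd1_log {V : ℂ → ℝ} (hd : DifferentiableAt ℝ V z) (hne : V z ≠ 0) (v : ℂ) :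
    fderiv ℝ (fun y => Real.log (V y)) z v = (V z)⁻¹ * fderiv ℝ V z v := by
  rw [(hd.hasFDerivAt.log hne).fderiv]
  simp

private lemma grad0sq_log {V : ℂ → ℝ} (hd : DifferentiableAt ℝ V z) (hne : V z ≠ 0) :
    grad0sq (fun w => Real.log (V w)) z = ((V z)⁻¹) ^ 2 * grad0sq V z := by
  unfold grad0sq
  rw [fd1_log hd hne 1, fd1_log hd hne Complex.I]
  ring

private lemma lap0_congr {g h : ℂ → ℝ} (he : g =ᶠ[𝓝 z] h) : lap0 g z = lap0 h z := by
  have h1 := he.fderiv (𝕜 := ℝ)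
  have h1v : ∀ v : ℂ, (fun w => fderiv ℝ g w v) =ᶠ[𝓝 z] fun w => fderiv ℝ h w v :=
    fun v => h1.mono fun w hw => by simp only [hw]
  unfold lap0
  rw [(h1v 1).fderiv_eq, (h1v Complex.I).fderiv_eq]

private lemma grad0sq_congr {g h : ℂ → ℝ} (he : g =ᶠ[𝓝 z] h) :
    grad0sq g z = grad0sq h z := by
  unfold grad0sq
  rw [he.fderiv_eq]

end helpers

private lemma key (κ : ℝ) (U : Set ℂ) (hU : IsOpen U)
    (u V : ℂ → ℝ) (hu : ContDiffOn ℝ (⊤ : ℕ∞) u U) (huharm : ∀ z ∈ U, lap0 u z = 0)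
    (hV : ContDiffOn ℝ (⊤ : ℕ∞) V U) (hVpos : ∀ z ∈ U, 0 < V z)
    (hcc : ∀ z ∈ U, -lap0 (fun w => u w + (1 / 2) * Real.log (V w)) z
      = κ * (V z * Real.exp (2 * u z)))
    (t : ℝ) (ht : t ≠ 0) :
    (∀ z ∈ U, curv (fun w => (-1 : ℝ) * u w + t * Real.log (V w)) z
        = (-2 * t * κ) * Real.exp ((2 * t + 1) * Real.log (V z))) ∧
    IsGenRicci (2 + 1 / t) 0 0 (fun w => (-1 : ℝ) * u w + t * Real.log (V w)) U := by
  have hVne : ∀ w ∈ U, V w ≠ 0 := fun w hw => (hVpos w hw).ne'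
  have hlogV : ContDiffOn ℝ (⊤ : ℕ∞) (fun w => Real.log (V w)) U := hV.log hVne
  -- Laplacian of log V from the constant-curvature equation
  have hlap_logV : ∀ z ∈ U, lap0 (fun w => Real.log (V w)) z
      = -2 * κ * (V z * Real.exp (2 * u z)) := by
    intro z hz
    have e := hcc z hz
    have e2 : lap0 (fun w => u w + (1 / 2) * Real.log (V w)) z
        = lap0 u z + lap0 (fun w => (1 / 2 : ℝ) * Real.log (V w)) z :=
      lap0_add hu (contDiffOn_const.mul hlogV) hU hz
    have e3 : lap0 (fun w => (1 / 2 : ℝ) * Real.log (V w)) z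
        = (1 / 2) * lap0 (fun w => Real.log (V w)) z :=
      lap0_const_mul hlogV hU hz (1 / 2)
    have e4 := huharm z hz
    rw [e2, e3, e4] at e
    linarith
  have hlapf : ∀ z ∈ U, lap0 (fun w => (-1 : ℝ) * u w + t * Real.log (V w)) z
      = t * (-2 * κ * (V z * Real.exp (2 * u z))) := by
    intro z hz
    have e2 : lap0 (fun w => (-1 : ℝ) * u w + t * Real.log (V w)) z
        = lap0 (fun w => (-1 : ℝ) * u w) z + lap0 (fun w => t * Real.log (V w)) z :=
      lap0_add (contDiffOn_const.mul hu) (contDiffOn_const.mul hlogV) hU hz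
    rw [e2, lap0_const_mul hu hU hz (-1), lap0_const_mul hlogV hU hz t,
      huharm z hz, hlap_logV z hz]
    ring
  have hcurv : ∀ z ∈ U, curv (fun w => (-1 : ℝ) * u w + t * Real.log (V w)) z
      = (-2 * t * κ) * Real.exp ((2 * t + 1) * Real.log (V z)) := by
    intro z hz
    unfold curv
    rw [hlapf z hz]
    have hVz : V z = Real.exp (Real.log (V z)) := (Real.exp_log (hVpos z hz)).symm
    rw [hVz, Real.log_exp]
    have e1 : Real.exp (2 * ((fun w => (-1 : ℝ) * u w + t * Real.log (V w)) z))
        * (Real.exp (Real.log (V z)) * Real.exp (2 * u z))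
        = Real.exp ((2 * t + 1) * Real.log (V z)) := by
      rw [← Real.exp_add, ← Real.exp_add]
      congr 1
      simp only []
      ring
    linear_combination (-2 * t * κ) * e1
  refine ⟨hcurv, fun z hz => ?_⟩
  have hKev : curv (fun w => (-1 : ℝ) * u w + t * Real.log (V w))
      =ᶠ[𝓝 z] fun w => (-2 * t * κ) * Real.exp ((2 * t + 1) * Real.log (V w)) := by
    filter_upwards [hU.mem_nhds hz] with w hw
    exact hcurv w hw
  have hG : ContDiffOn ℝ (⊤ : ℕ∞) (fun w => (2 * t + 1) * Real.log (V w)) U :=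
    contDiffOn_const.mul hlogV
  have hexpG : ContDiffOn ℝ (⊤ : ℕ∞) (fun w => Real.exp ((2 * t + 1) * Real.log (V w))) U :=
    (Real.contDiff_exp.comp_contDiffOn hG)
  have hlapK : lap0 (curv (fun w => (-1 : ℝ) * u w + t * Real.log (V w))) z
      = (-2 * t * κ) * (Real.exp ((2 * t + 1) * Real.log (V z))
        * (lap0 (fun w => (2 * t + 1) * Real.log (V w)) z
          + grad0sq (fun w => (2 * t + 1) * Real.log (V w)) z)) := by
    rw [lap0_congr hKev, lap0_const_mul hexpG hU hz (-2 * t * κ),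
      lap0_exp hG hU hz]
  have hgradK : grad0sq (curv (fun w => (-1 : ℝ) * u w + t * Real.log (V w))) z
      = (-2 * t * κ) ^ 2 * ((Real.exp ((2 * t + 1) * Real.log (V z))) ^ 2
        * grad0sq (fun w => (2 * t + 1) * Real.log (V w)) z) := by
    rw [grad0sq_congr hKev,
      grad0sq_const_mul (diffAt hexpG hU hz) (-2 * t * κ),
      grad0sq_exp (diffAt hG hU hz)]
  have hlapG : lap0 (fun w => (2 * t + 1) * Real.log (V w)) z
      = (2 * t + 1) * (-2 * κ * (V z * Real.exp (2 * u z))) := by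
    rw [lap0_const_mul hlogV hU hz (2 * t + 1), hlap_logV z hz]
  have hgradG : grad0sq (fun w => (2 * t + 1) * Real.log (V w)) z
      = (2 * t + 1) ^ 2 * (((V z)⁻¹) ^ 2 * grad0sq V z) := by
    rw [grad0sq_const_mul (diffAt hlogV hU hz) (2 * t + 1),
      grad0sq_log (diffAt hV hU hz) (hVne z hz)]
  show (0 - curv (fun w => (-1:ℝ) * u w + t * Real.log (V w)) z) * _ + _ + _ = 0
  rw [hlapK, hgradK, hlapG, hgradG, hcurv z hz]
  simp only []
  have hVz := hVpos z hz
  generalize hl : Real.log (V z) = l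
  have hVzl : V z = Real.exp l := by rw [← hl, Real.exp_log hVz]
  have e1 : Real.exp ((2 * t + 1) * l) = Real.exp (2 * t * l) * V z := by
    rw [hVzl, ← Real.exp_add]; congr 1; ring
  have e2 : Real.exp (2 * (-1 * u z + t * l))
      = Real.exp (2 * t * l) / Real.exp (2 * u z) := by
    rw [← Real.exp_sub]; congr 1; ring
  rw [e1, e2]
  have hA : Real.exp (2 * u z) ≠ 0 := (Real.exp_pos _).ne'
  have hVne' : V z ≠ 0 := hVz.ne'
  field_simp
  ring

theorem stmt9 (κ : ℝ) (hκ : κ ≠ 0) (U : Set ℂ) (hU : IsOpen U)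
    (u V : ℂ → ℝ) (hu : ContDiffOn ℝ (⊤ : ℕ∞) u U) (huharm : ∀ z ∈ U, lap0 u z = 0)
    (hV : ContDiffOn ℝ (⊤ : ℕ∞) V U) (hVpos : ∀ z ∈ U, 0 < V z)
    (hcc : ∀ z ∈ U, -lap0 (fun w => u w + (1 / 2) * Real.log (V w)) z
      = κ * (V z * Real.exp (2 * u z))) :
    (IsGenRicci (2 + 2 * |κ|) 0 0
        (fun w => -(u w) + (1 / (2 * |κ|)) * Real.log (V w)) U ∧
      ∀ z ∈ U, curv (fun w => -(u w) + (1 / (2 * |κ|)) * Real.log (V w)) z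
        = -Real.sign κ * V z ^ ((|κ| + 1) / |κ|)) ∧
    (IsGenRicci (2 - 2 * |κ|) 0 0
        (fun w => -(u w) - (1 / (2 * |κ|)) * Real.log (V w)) U ∧
      ∀ z ∈ U, curv (fun w => -(u w) - (1 / (2 * |κ|)) * Real.log (V w)) z
        = Real.sign κ * V z ^ ((|κ| - 1) / |κ|)) := by
  have habs : |κ| ≠ 0 := abs_ne_zero.mpr hκ
  have hs2 : Real.sign κ = κ / |κ| := by
    rcases hκ.lt_or_gt with h | h
    · rw [Real.sign_of_neg h, abs_of_neg h]; field_simp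
    · rw [Real.sign_of_pos h, abs_of_pos h]; field_simp
  have habspos : (0 : ℝ) < |κ| := abs_pos.mpr hκ
  have ht : (1 / (2 * |κ|) : ℝ) ≠ 0 := by positivity
  constructor
  · have hfun : (fun w => -(u w) + (1 / (2 * |κ|)) * Real.log (V w))
        = fun w => (-1 : ℝ) * u w + (1 / (2 * |κ|)) * Real.log (V w) := by
      funext w; ring
    rw [hfun]
    obtain ⟨hc, hg⟩ := key κ U hU u V hu huharm hV hVpos hcc _ ht
    constructor
    · have h1 : (2 : ℝ) + 1 / (1 / (2 * |κ|)) = 2 + 2 * |κ| := by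
        rw [one_div_one_div]
      rw [← h1]; exact hg
    · intro z hz
      rw [hc z hz]
      have hrp : (V z : ℝ) ^ ((|κ| + 1) / |κ|)
          = Real.exp ((2 * (1 / (2 * |κ|)) + 1) * Real.log (V z)) := by
        rw [Real.rpow_def_of_pos (hVpos z hz)]
        congr 1
        field_simp
        ring
      rw [hrp, hs2]
      field_simp
  · have hfun : (fun w => -(u w) - (1 / (2 * |κ|)) * Real.log (V w))
        = fun w => (-1 : ℝ) * u w + (-(1 / (2 * |κ|))) * Real.log (V w) := by
      funext w; ring
    rw [hfun]
    obtain ⟨hc, hg⟩ := key κ U hU u V hu huharm hV hVpos hcc _ (neg_ne_zero.mpr ht)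
    constructor
    · have h1 : (2 : ℝ) + 1 / (-(1 / (2 * |κ|))) = 2 - 2 * |κ| := by
        rw [div_neg, one_div_one_div]; ring
      rw [← h1]; exact hg
    · intro z hz
      rw [hc z hz]
      have hrp : (V z : ℝ) ^ ((|κ| - 1) / |κ|)
          = Real.exp ((2 * (-(1 / (2 * |κ|))) + 1) * Real.log (V z)) := by
        rw [Real.rpow_def_of_pos (hVpos z hz)]
        congr 1
        field_simp
        ring
      rw [hrp, hs2]
      field_simp
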